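/- Let q, d ≥ 2 be integers, and suppose that the density δ(q, d; s) exists for every s ∈ ℤ^5. Then δ(q, d; s) is a rational number for every s ∈ ℤ^5. -/

import Mathlib

open Filter

/-- `vq q n` is the `q`-adic valuation: `0` if `n = 0`, and otherwise the
largest `k` such that `q ^ k` divides `n`. -/
noncomputable def vq (q n : ℕ) : ℕ := if n = 0 then 0 else sSup {k : ℕ | q ^ k ∣ n}

/-- `wq q n = ∑_{i=0}^n vq q i`. -/
noncomputable def wq (q n : ℕ) : ℕ := ∑ i ∈ Finset.range (n + 1), vq q i

/-- `uq q n = ∑_{i=0}^n wq q i`. -/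
noncomputable def uq (q n : ℕ) : ℕ := ∑ i ∈ Finset.range (n + 1), wq q i

/-- `gamma q d tu tw t2 t1 t0 A` is the number of `n < A` with
`tu·u_q(n) + tw·w_q(n) + t2·n(n+1)/2 + t1·n + t0 ≡ 0 (mod d)`. -/
noncomputable def gamma (q d : ℕ) (tu tw t2 t1 t0 : ℤ) (A : ℕ) : ℕ :=
  ((Finset.range A).filter fun n =>
    (tu * uq q n + tw * wq q n + t2 * (n * (n + 1) / 2 : ℕ) + t1 * n + t0) % (d : ℤ) = 0).card

open Finset Topology

/-!
The vector `x n = (u_q n, w_q n, n (n + 1) / 2, n) mod d` is generated by a `q`-automaton: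
`x (q m + r) = φ_r (x m)` for every digit `r < q`, with explicit affine maps `φ_r`. Hence the
proportion of `n < q ^ K` with `x n` in a set `W` is `(M ^ K 1_W) (x 0)`, where
`M h = q⁻¹ ∑_r h ∘ φ_r` is a Markov operator on `S → ℚ`. Being a sup-norm contraction, `M`
splits `S → ℚ` as `ker (1 - M) ⊕ range (1 - M)`; writing `1_W = k + (z - M z)` these proportions
become `k (x 0) + b K - b (K + 1)` with `b` bounded, so by Cesàro their limit, the density, is the
rational number `k (x 0)`.
-/

def tri (n : ℕ) : ℕ := n * (n + 1) / 2

lemma two_mul_tri (n : ℕ) : 2 * tri n = n * (n + 1) :=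
  Nat.mul_div_cancel' (Nat.even_mul_succ_self n).two_dvd

lemma tri_succ (n : ℕ) : tri (n + 1) = tri n + (n + 1) := by
  have h₁ := two_mul_tri n
  have h₂ := two_mul_tri (n + 1)
  linarith

lemma tri_mul_add (q m r : ℕ) :
    tri (q * m + r) + tri (q - 1) * m = q * q * tri m + q * r * m + tri r := by
  cases q with
  | zero => simp [tri]
  | succ p =>
    have h₁ := two_mul_tri ((p + 1) * m + r)
    have h₂ := two_mul_tri p
    have h₃ := two_mul_tri m
    have h₄ := two_mul_tri r
    rw [add_tsub_cancel_right]
    nlinarith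

section Valuation

variable {q : ℕ}

lemma vq_eq_padicValNat (hq : q ≠ 1) (n : ℕ) : vq q n = padicValNat q n := by
  rcases eq_or_ne n 0 with rfl | hn
  · simp [vq]
  · have hset : {k : ℕ | q ^ k ∣ n} = Set.Iic (padicValNat q n) := by
      ext k
      exact Nat.pow_dvd_iff_le_padicValNat hq hn
    rw [vq, if_neg hn, hset, csSup_Iic]

lemma wq_succ (n : ℕ) : wq q (n + 1) = wq q n + vq q (n + 1) :=
  sum_range_succ _ _

lemma uq_succ (n : ℕ) : uq q (n + 1) = uq q n + wq q (n + 1) :=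
  sum_range_succ _ _

lemma wq_mul_add_of_lt (hq : 1 < q) (m : ℕ) {r : ℕ} (hr : r < q) :
    wq q (q * m + r) = wq q (q * m) := by
  induction r with
  | zero => rfl
  | succ r ih =>
    have hndvd : ¬ q ∣ q * m + (r + 1) := by
      rw [Nat.dvd_add_right (dvd_mul_right q m)]
      exact Nat.not_dvd_of_pos_of_lt r.succ_pos hr
    rw [← add_assoc, wq_succ, ih (by omega), add_assoc,
      vq_eq_padicValNat hq.ne', padicValNat.eq_zero_of_not_dvd hndvd, add_zero]

lemma wq_mul (hq : 1 < q) (m : ℕ) : wq q (q * m) = wq q m + m := by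
  induction m with
  | zero => simp [wq, vq]
  | succ m ih =>
    have hsplit : q * (m + 1) = q * m + (q - 1) + 1 := by rw [mul_add]; omega
    rw [hsplit, wq_succ, wq_mul_add_of_lt hq m (by omega), ih, ← hsplit, wq_succ,
      vq_eq_padicValNat hq.ne', vq_eq_padicValNat hq.ne', padicValNat_base_mul hq m.succ_ne_zero]
    ring

lemma wq_mul_add (hq : 1 < q) (m : ℕ) {r : ℕ} (hr : r < q) :
    wq q (q * m + r) = wq q m + m := by
  rw [wq_mul_add_of_lt hq m hr, wq_mul hq]

lemma uq_mul_add (hq : 1 < q) (m : ℕ) {r : ℕ} (hr : r < q) :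
    uq q (q * m + r) = uq q (q * m) + r * (wq q m + m) := by
  induction r with
  | zero => simp
  | succ r ih =>
    rw [← add_assoc, uq_succ, ih (by omega), add_assoc (q * m), wq_mul_add hq m hr]
    ring

lemma uq_mul (hq : 1 < q) (m : ℕ) :
    uq q (q * m) + (q - 1) * (wq q m + m) = q * uq q m + q * tri m := by
  induction m with
  | zero => simp [uq, wq, vq, tri]
  | succ m ih =>
    have hsplit : q * (m + 1) = q * m + (q - 1) + 1 := by rw [mul_add]; omega
    rw [hsplit, uq_succ, uq_mul_add hq m (by omega), ← hsplit, wq_mul hq, uq_succ, tri_succ]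
    obtain ⟨p, rfl⟩ := Nat.exists_eq_add_of_lt hq
    simp only [add_tsub_cancel_right] at *
    linarith

end Valuation

section Automatic

variable {S : Type*}

noncomputable def markovOp (q : ℕ) (φ : ℕ → S → S) : (S → ℚ) →ₗ[ℚ] (S → ℚ) where
  toFun h s := (∑ r ∈ range q, h (φ r s)) / q
  map_add' g h := by
    funext s
    simp only [Pi.add_apply, sum_add_distrib, add_div]
  map_smul' c h := by
    funext s
    simp only [Pi.smul_apply, smul_eq_mul, RingHom.id_apply, ← mul_sum, mul_div_assoc]

variable {q : ℕ} {φ : ℕ → S → S}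

lemma markovOp_apply (h : S → ℚ) (s : S) :
    markovOp q φ h s = (∑ r ∈ range q, h (φ r s)) / q := rfl

variable {X : ℕ → S}

lemma sum_range_mul_eq_markovOp (hX : ∀ m r, r < q → X (q * m + r) = φ r (X m))
    (h : S → ℚ) (N : ℕ) :
    ∑ n ∈ range (q * N), h (X n) = q * ∑ m ∈ range N, markovOp q φ h (X m) := by
  rcases Nat.eq_zero_or_pos q with rfl | hq
  · simp
  induction N with
  | zero => simp
  | succ N ih =>
    rw [mul_add_one, sum_range_add, ih, sum_range_succ, mul_add, markovOp_apply,
      mul_div_cancel₀ _ (by exact_mod_cast hq.ne')]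
    congr 1
    exact sum_congr rfl fun r hr => by rw [hX N r (mem_range.mp hr)]

lemma sum_range_pow_eq_markovOp_pow (hX : ∀ m r, r < q → X (q * m + r) = φ r (X m))
    (K : ℕ) (h : S → ℚ) :
    ∑ n ∈ range (q ^ K), h (X n) = q ^ K * (markovOp q φ ^ K) h (X 0) := by
  induction K generalizing h with
  | zero => simp
  | succ K ih =>
    rw [pow_succ', sum_range_mul_eq_markovOp hX, ih, pow_succ (markovOp q φ),
      Module.End.mul_apply]
    ring

variable [Fintype S]

lemma norm_markovOp_le (h : S → ℚ) : ‖markovOp q φ h‖ ≤ ‖h‖ := by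
  refine pi_norm_le_iff_of_nonneg (norm_nonneg h) |>.mpr fun s => ?_
  rcases Nat.eq_zero_or_pos q with rfl | hq
  · simp [markovOp_apply]
  have hnorm : ‖(q : ℚ)‖ = q := by rw [← Rat.norm_cast_real]; simp
  rw [markovOp_apply, norm_div, hnorm, div_le_iff₀ (by exact_mod_cast hq)]
  calc ‖∑ r ∈ range q, h (φ r s)‖ ≤ ∑ r ∈ range q, ‖h (φ r s)‖ := norm_sum_le _ _
    _ ≤ ∑ r ∈ range q, ‖h‖ := sum_le_sum fun r _ => norm_le_pi_norm h _
    _ = ‖h‖ * q := by rw [sum_const, card_range, nsmul_eq_mul, mul_comm]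

end Automatic

section MeanErgodic

variable {E : Type*} [NormedAddCommGroup E] [NormedSpace ℚ E] {f : E →ₗ[ℚ] E}

lemma mem_ker_one_sub_iff {x : E} : x ∈ LinearMap.ker (1 - f) ↔ f x = x := by
  rw [LinearMap.mem_ker, LinearMap.sub_apply, Module.End.one_apply, sub_eq_zero, eq_comm]

lemma norm_pow_apply_le (hf : ∀ x, ‖f x‖ ≤ ‖x‖) (K : ℕ) (x : E) : ‖(f ^ K) x‖ ≤ ‖x‖ := by
  induction K with
  | zero => simp
  | succ K ih =>
    rw [pow_succ', Module.End.mul_apply]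
    exact (hf _).trans ih

-- If `y = x - f x` is fixed by `f`, then `f ^ K x = x - K • y` stays bounded only if `y = 0`.
lemma disjoint_ker_range_one_sub (hf : ∀ x, ‖f x‖ ≤ ‖x‖) :
    Disjoint (LinearMap.ker (1 - f)) (LinearMap.range (1 - f)) := by
  refine Submodule.disjoint_def.mpr fun y hker hrange => ?_
  have hfy : f y = y := mem_ker_one_sub_iff.mp hker
  obtain ⟨x, rfl⟩ := hrange
  have horbit : ∀ K : ℕ, (f ^ K) x = x - (K : ℚ) • (1 - f) x := by
    intro K
    induction K with
    | zero => simp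
    | succ K ih =>
      rw [pow_succ', Module.End.mul_apply, ih, map_sub, map_smul, hfy]
      simp only [LinearMap.sub_apply, Module.End.one_apply, Nat.cast_succ]
      module
  have hbound : ∀ K : ℕ, (K : ℝ) * ‖(1 - f) x‖ ≤ 2 * ‖x‖ := by
    intro K
    have hK : (K : ℚ) • (1 - f) x = x - (f ^ K) x := by rw [horbit]; abel
    calc (K : ℝ) * ‖(1 - f) x‖ = ‖(K : ℚ) • (1 - f) x‖ := by
          rw [norm_smul, ← Rat.norm_cast_real]; simp
      _ ≤ ‖x‖ + ‖(f ^ K) x‖ := hK ▸ norm_sub_le _ _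
      _ ≤ 2 * ‖x‖ := by linarith [norm_pow_apply_le hf K x]
  by_contra hne
  have hpos : 0 < ‖(1 - f) x‖ := norm_pos_iff.mpr hne
  obtain ⟨K, hK⟩ := exists_nat_gt (2 * ‖x‖ / ‖(1 - f) x‖)
  linarith [hbound K, (div_lt_iff₀ hpos).mp hK]

lemma exists_eq_add_sub_apply [FiniteDimensional ℚ E] (hf : ∀ x, ‖f x‖ ≤ ‖x‖) (x : E) :
    ∃ k z, f k = k ∧ x = k + (z - f z) := by
  have hcompl : IsCompl (LinearMap.ker (1 - f)) (LinearMap.range (1 - f)) :=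
    (Submodule.isCompl_iff_disjoint _ _
      (by linarith [LinearMap.finrank_range_add_finrank_ker (1 - f)])).mpr
      (disjoint_ker_range_one_sub hf)
  obtain ⟨k, hk, _, ⟨z, rfl⟩, hx⟩ := Submodule.mem_sup.mp (hcompl.sup_eq_top ▸ Submodule.mem_top)
  exact ⟨k, z, mem_ker_one_sub_iff.mp hk, hx.symm⟩

end MeanErgodic

lemma eq_of_tendsto_add_sub_succ {b : ℕ → ℝ} {C c δ : ℝ} (hb : ∀ K, |b K| ≤ C)
    (h : Tendsto (fun K => c + (b K - b (K + 1))) atTop (𝓝 δ)) : δ = c := by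
  have hcesaro := ((tendsto_sub_const_iff c).mpr h).cesaro
  simp only [add_sub_cancel_left, sum_range_sub'] at hcesaro
  have hzero : Tendsto (fun n : ℕ => (n : ℝ)⁻¹ * (b 0 - b n)) atTop (𝓝 0) := by
    refine squeeze_zero_norm (fun n => ?_)
      (by simpa using tendsto_inv_atTop_nhds_zero_nat.mul_const (2 * C))
    rw [norm_mul, norm_inv, Real.norm_natCast, Real.norm_eq_abs]
    gcongr
    linarith [abs_sub (b 0) (b n), hb 0, hb n]
  exact sub_eq_zero.mp (tendsto_nhds_unique hcesaro hzero)

theorem exists_rat_eq_of_tendsto_pow_apply {S : Type*} [Fintype S]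
    {M : (S → ℚ) →ₗ[ℚ] (S → ℚ)} (hM : ∀ g, ‖M g‖ ≤ ‖g‖) (h : S → ℚ) (s : S) {δ : ℝ}
    (hδ : Tendsto (fun K => ((M ^ K) h s : ℝ)) atTop (𝓝 δ)) : ∃ r : ℚ, δ = r := by
  obtain ⟨k, z, hk, rfl⟩ := exists_eq_add_sub_apply hM h
  have hfixed : ∀ K : ℕ, (M ^ K) k = k := fun K => by
    rw [Module.End.pow_apply]; exact Function.iterate_fixed hk K
  refine ⟨k s, eq_of_tendsto_add_sub_succ (b := fun K => ((M ^ K) z s : ℝ)) (C := ‖z‖)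
    (fun K => ?_) (hδ.congr fun K => ?_)⟩
  · rw [← Real.norm_eq_abs, Rat.norm_cast_real]
    exact (norm_le_pi_norm _ s).trans (norm_pow_apply_le hM K z)
  · rw [map_add, map_sub, hfixed, pow_succ, Module.End.mul_apply]
    simp only [Pi.add_apply, Pi.sub_apply]
    push_cast
    rfl

theorem exists_rat_eq_of_tendsto_density {S : Type*} [Fintype S] {q : ℕ} (hq : 1 < q)
    {φ : ℕ → S → S} {X : ℕ → S} (hX : ∀ m r, r < q → X (q * m + r) = φ r (X m))
    (p : S → Prop) [DecidablePred p] {δ : ℝ}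
    (hδ : Tendsto (fun N : ℕ => (#{n ∈ range N | p (X n)} : ℝ) / N) atTop (𝓝 δ)) :
    ∃ r : ℚ, δ = r := by
  let h : S → ℚ := fun s => if p s then 1 else 0
  refine exists_rat_eq_of_tendsto_pow_apply (M := markovOp q φ) norm_markovOp_le h (X 0)
    ((hδ.comp (tendsto_pow_atTop_atTop_of_one_lt hq)).congr fun K => ?_)
  have hK : (markovOp q φ ^ K) h (X 0) =
      (#{n ∈ range (q ^ K) | p (X n)} : ℚ) / (q ^ K : ℕ) := by
    rw [eq_div_iff (by positivity), mul_comm, Nat.cast_pow, ← sum_range_pow_eq_markovOp_pow hX,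
      natCast_card_filter]
  simp [hK]

noncomputable def digitState (q d n : ℕ) : ZMod d × ZMod d × ZMod d × ZMod d :=
  (uq q n, wq q n, tri n, n)

def digitStep (q d r : ℕ) :
    ZMod d × ZMod d × ZMod d × ZMod d → ZMod d × ZMod d × ZMod d × ZMod d
  | (u, w, t, n) =>
    (q * u + q * t + (r + 1 - q) * (w + n), w + n,
      q * q * t + q * r * n + tri r - tri (q - 1) * n, q * n + r)

lemma digitState_mul_add {q : ℕ} (hq : 1 < q) (d m : ℕ) {r : ℕ} (hr : r < q) :
    digitState q d (q * m + r) = digitStep q d r (digitState q d m) := by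
  have hu : ((uq q (q * m + r) : ℕ) : ZMod d) = uq q (q * m) + r * (wq q m + m) := by
    rw [uq_mul_add hq m hr]; push_cast; ring
  have hu₀ : ((uq q (q * m) + (q - 1) * (wq q m + m) : ℕ) : ZMod d) =
      q * uq q m + q * tri m := by
    rw [uq_mul hq m]; push_cast; ring
  have hw : ((wq q (q * m + r) : ℕ) : ZMod d) = wq q m + m := by
    rw [wq_mul_add hq m hr]; push_cast; ring
  have ht : ((tri (q * m + r) + tri (q - 1) * m : ℕ) : ZMod d) =
      q * q * tri m + q * r * m + tri r := by
    rw [tri_mul_add]; push_cast; ring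
  push_cast [Nat.cast_sub hq.le] at hu₀ ht
  simp only [digitState, digitStep, Prod.mk.injEq]
  refine ⟨?_, hw, ?_, by push_cast; ring⟩
  · linear_combination hu + hu₀
  · linear_combination ht

def linearForm (d : ℕ) (tu tw t2 t1 t0 : ℤ) (x : ZMod d × ZMod d × ZMod d × ZMod d) : ZMod d :=
  tu * x.1 + tw * x.2.1 + t2 * x.2.2.1 + t1 * x.2.2.2 + t0

lemma gamma_eq_card_filter (q d : ℕ) (tu tw t2 t1 t0 : ℤ) (N : ℕ) :
    gamma q d tu tw t2 t1 t0 N =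
      #{n ∈ range N | linearForm d tu tw t2 t1 t0 (digitState q d n) = 0} := by
  refine congrArg card (filter_congr fun n _ => ?_)
  rw [← Int.dvd_iff_emod_eq_zero, ← ZMod.intCast_zmod_eq_zero_iff_dvd]
  simp only [linearForm, digitState, tri, Int.cast_add, Int.cast_mul, Int.cast_natCast]

theorem stmt_6 (q d : ℕ) (hq : 2 ≤ q) (hd : 2 ≤ d)
    (delta : ℤ → ℤ → ℤ → ℤ → ℤ → ℝ)
    (hdelta : ∀ tu tw t2 t1 t0 : ℤ,
      Tendsto (fun N : ℕ => (gamma q d tu tw t2 t1 t0 N : ℝ) / N) atTop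
        (nhds (delta tu tw t2 t1 t0)))
    (tu tw t2 t1 t0 : ℤ) :
    ∃ r : ℚ, delta tu tw t2 t1 t0 = (r : ℝ) := by
  have : NeZero d := ⟨by omega⟩
  refine exists_rat_eq_of_tendsto_density hq (digitState_mul_add hq d)
    (fun x => linearForm d tu tw t2 t1 t0 x = 0) ?_
  simpa only [gamma_eq_card_filter] using hdelta tu tw t2 t1 t0
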